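/- Sandwich bound for the total variation distance: for all integers 1 ≤ m ≤ n and every real p ∈ [0,1], |2p−1|·‖Q_{m,n,1} − Uni_n‖_TV ≤ ‖Q_{m,n,p} − Uni_n‖_TV ≤ ‖Q_{m,n,1} − Uni_n‖_TV. -/

import Mathlib

/-!
On `{1,…,n}` the distribution `Q_{m,n,p}` is the mixture `p·Q_{m,n,1} + (1-p)·(Q_{m,n,1} ∘ σ)`
with the reflection `σ j = n + 1 - j`, which fixes the uniform distribution. The upper bound is
then convexity of the `ℓ¹` norm. For the lower bound, writing `g` for the mixture of
`f = Q_{m,n,1} - Uni_n`, one has `(2p-1)·f = p·g - (1-p)·(g ∘ σ)`, and the triangle inequality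
bounds `|2p-1|·‖f‖₁` by `‖g‖₁`.
-/

/-- `T m n s = C(m-1,s)·(n-s)^(m-s-2)·(s+1)^(s-1)` in `ℝ`, with integer (possibly
negative) exponents interpreted via `zpow`. -/
noncomputable def T (m n s : ℕ) : ℝ :=
  ((m - 1).choose s : ℝ) * ((n : ℝ) - s) ^ ((m : ℤ) - s - 2) * ((s : ℝ) + 1) ^ ((s : ℤ) - 1)

/-- `Q m n p j` is the conditional probability that the last of `m` cars prefers spot
`j ∈ {1,…,n}` given that all cars park, in the probabilistic parking model on `n` spots
with forward-probability `p` (Theorem 3 of Durmić–Han–Harris–Ribeiro–Yin):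
`Q_{m,n,p}(j) = (n-m+2)/((n-m+1)(n+1)) − (1/(n+1)^(m-1))·
  [ p·Σ_{s=n-j+1}^{m-1} T(s) + (1-p)·Σ_{s=j}^{m-1} T(s) ]`. -/
noncomputable def Q (m n : ℕ) (p : ℝ) (j : ℕ) : ℝ :=
  ((n : ℝ) - m + 2) / (((n : ℝ) - m + 1) * ((n : ℝ) + 1)) -
    1 / ((n : ℝ) + 1) ^ (m - 1) *
      (p * ∑ s ∈ Finset.Icc (n - j + 1) (m - 1), T m n s +
        (1 - p) * ∑ s ∈ Finset.Icc j (m - 1), T m n s)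

/-- Total variation distance between `Q m n p` and the uniform distribution on `{1,…,n}`:
`(1/2)·Σ_{j=1}^n |Q_{m,n,p}(j) − 1/n|`. -/
noncomputable def tvUni (m n : ℕ) (p : ℝ) : ℝ :=
  1 / 2 * ∑ j ∈ Finset.Icc 1 n, |Q m n p j - 1 / (n : ℝ)|

open Finset

section Involution

variable {ι : Type*} {s : Finset ι} {σ : ι → ι}

theorem Finset.sum_comp_of_involutive (hσs : ∀ j ∈ s, σ j ∈ s) (hσσ : ∀ j ∈ s, σ (σ j) = j)
    (h : ι → ℝ) : ∑ j ∈ s, h (σ j) = ∑ j ∈ s, h j :=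
  sum_nbij' σ σ hσs hσs hσσ hσσ fun _ _ => rfl

theorem sum_mix_involution (hσs : ∀ j ∈ s, σ j ∈ s) (hσσ : ∀ j ∈ s, σ (σ j) = j) (p : ℝ)
    (h : ι → ℝ) : ∑ j ∈ s, (p * h j + (1 - p) * h (σ j)) = ∑ j ∈ s, h j := by
  rw [sum_add_distrib, ← mul_sum, ← mul_sum, sum_comp_of_involutive hσs hσσ h]
  ring

theorem abs_mix_le {p : ℝ} (hp0 : 0 ≤ p) (hp1 : p ≤ 1) (a b : ℝ) :
    |p * a + (1 - p) * b| ≤ p * |a| + (1 - p) * |b| :=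
  calc |p * a + (1 - p) * b| ≤ |p * a| + |(1 - p) * b| := abs_add_le _ _
    _ = p * |a| + (1 - p) * |b| := by
      rw [abs_mul, abs_mul, abs_of_nonneg hp0, abs_of_nonneg (sub_nonneg.2 hp1)]

theorem sum_abs_mix_involution_le {p : ℝ} (hp0 : 0 ≤ p) (hp1 : p ≤ 1)
    (hσs : ∀ j ∈ s, σ j ∈ s) (hσσ : ∀ j ∈ s, σ (σ j) = j) (f : ι → ℝ) :
    ∑ j ∈ s, |p * f j + (1 - p) * f (σ j)| ≤ ∑ j ∈ s, |f j| :=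
  calc _ ≤ ∑ j ∈ s, (p * |f j| + (1 - p) * |f (σ j)|) :=
        sum_le_sum fun _ _ => abs_mix_le hp0 hp1 _ _
    _ = ∑ j ∈ s, |f j| := sum_mix_involution hσs hσσ p fun j => |f j|

theorem abs_two_mul_sub_one_mul_sum_abs_le_sum_abs_mix_involution {p : ℝ} (hp0 : 0 ≤ p)
    (hp1 : p ≤ 1) (hσs : ∀ j ∈ s, σ j ∈ s) (hσσ : ∀ j ∈ s, σ (σ j) = j) (f : ι → ℝ) :
    |2 * p - 1| * ∑ j ∈ s, |f j| ≤ ∑ j ∈ s, |p * f j + (1 - p) * f (σ j)| := by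
  set g : ι → ℝ := fun j => p * f j + (1 - p) * f (σ j)
  have hpoint : ∀ j ∈ s, |2 * p - 1| * |f j| ≤ p * |g j| + (1 - p) * |g (σ j)| := by
    intro j hj
    have hf : (2 * p - 1) * f j = p * g j + (1 - p) * -g (σ j) := by
      simp only [g, hσσ j hj]; ring
    rw [← abs_mul, hf, ← abs_neg (g (σ j))]
    exact abs_mix_le hp0 hp1 _ _
  calc _ = ∑ j ∈ s, |2 * p - 1| * |f j| := mul_sum _ _ _
    _ ≤ ∑ j ∈ s, (p * |g j| + (1 - p) * |g (σ j)|) := sum_le_sum hpoint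
    _ = ∑ j ∈ s, |g j| := sum_mix_involution hσs hσσ p fun j => |g j|

end Involution

theorem mem_Icc_reflect {n j : ℕ} (hj : j ∈ Icc 1 n) : n + 1 - j ∈ Icc 1 n := by
  simp only [mem_Icc] at hj ⊢; omega

theorem reflect_reflect {n j : ℕ} (hj : j ∈ Icc 1 n) : n + 1 - (n + 1 - j) = j := by
  simp only [mem_Icc] at hj; omega

theorem Q_eq_mix_reflect (m n : ℕ) (p : ℝ) {j : ℕ} (hj : j ∈ Icc 1 n) :
    Q m n p j = p * Q m n 1 j + (1 - p) * Q m n 1 (n + 1 - j) := by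
  have h : n - (n + 1 - j) + 1 = j := by simp only [mem_Icc] at hj; omega
  simp only [Q, h]; ring

theorem tvUni_eq_sum_abs_mix_reflect (m n : ℕ) (p : ℝ) :
    tvUni m n p = 1 / 2 * ∑ j ∈ Icc 1 n,
      |p * (Q m n 1 j - 1 / n) + (1 - p) * (Q m n 1 (n + 1 - j) - 1 / n)| := by
  unfold tvUni
  congr 1
  refine sum_congr rfl fun j hj => ?_
  rw [Q_eq_mix_reflect m n p hj]
  congr 1
  ring

theorem tv_sandwich_general (m n : ℕ)
    (p : ℝ) (hp0 : 0 ≤ p) (hp1 : p ≤ 1) :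
    |2 * p - 1| * tvUni m n 1 ≤ tvUni m n p ∧ tvUni m n p ≤ tvUni m n 1 := by
  set f : ℕ → ℝ := fun j => Q m n 1 j - 1 / n
  have h1 : tvUni m n 1 = 1 / 2 * ∑ j ∈ Icc 1 n, |f j| := rfl
  rw [tvUni_eq_sum_abs_mix_reflect m n p, h1]
  constructor
  · rw [mul_left_comm]
    exact mul_le_mul_of_nonneg_left
      (abs_two_mul_sub_one_mul_sum_abs_le_sum_abs_mix_involution hp0 hp1
        (fun _ => mem_Icc_reflect) (fun _ => reflect_reflect) f) (by norm_num)
  · exact mul_le_mul_of_nonneg_left (sum_abs_mix_involution_le hp0 hp1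
      (fun _ => mem_Icc_reflect) (fun _ => reflect_reflect) f) (by norm_num)

/-- Sandwich bound for the total variation distance: for `1 ≤ m ≤ n` and `p ∈ [0,1]`,
`|2p−1|·‖Q_{m,n,1} − Uni_n‖_TV ≤ ‖Q_{m,n,p} − Uni_n‖_TV ≤ ‖Q_{m,n,1} − Uni_n‖_TV`. -/
theorem tv_sandwich (m n : ℕ) (hm : 1 ≤ m) (hmn : m ≤ n)
    (p : ℝ) (hp0 : 0 ≤ p) (hp1 : p ≤ 1) :
    |2 * p - 1| * tvUni m n 1 ≤ tvUni m n p ∧ tvUni m n p ≤ tvUni m n 1 :=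
  tv_sandwich_general m n p hp0 hp1
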